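/- arXiv:2112.03975 — 2 statements merged into one kernel-verified Lean document; each statement's English description precedes it below -/
import Mathlib

section
/- Let s ≥ 1, x^(0) < ... < x^(s) real, and V : [x^(0), x^(s)] → ℝ continuous piecewise quadratic with V(x) = S^(i)x² + l^(i)x + c^(i) on [x^(i-1), x^(i)]. Then there exist weights W⁽¹⁾ ∈ ℝ^{2s×2}, a⁽¹⁾ ∈ ℝ^{2s}, W⁽²⁾ ∈ ℝ^{1×2s}, a⁽²⁾ ∈ ℝ such that V(x) = W⁽²⁾ max{0, W⁽¹⁾(x, x²)ᵀ + a⁽¹⁾} + a⁽²⁾ for all x ∈ [x^(0), x^(s)], i.e., V is exactly represented by a ReLU network with one hidden layer of width 2s and inputs (x, x²). -/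
open Finset

private lemma sum_range_two_mul {β : Type*} [AddCommMonoid β] (f : ℕ → β) (n : ℕ) :
    ∑ j ∈ range (2 * n), f j = ∑ i ∈ range n, (f (2 * i) + f (2 * i + 1)) := by
  induction n with
  | zero => simp
  | succ n ih =>
    have h2 : 2 * (n + 1) = (2 * n + 1) + 1 := by ring
    rw [h2, Finset.sum_range_succ, Finset.sum_range_succ, ih, Finset.sum_range_succ,
      add_assoc]

private lemma find_piece (xp : ℕ → ℝ) (x : ℝ) :
    ∀ s, 1 ≤ s → (∀ i < s, xp i < xp (i + 1)) → xp 0 ≤ x → x ≤ xp s →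
      ∃ k, 1 ≤ k ∧ k ≤ s ∧ xp (k - 1) ≤ x ∧ x ≤ xp k := by
  intro s
  induction s with
  | zero => omega
  | succ n ih =>
    intro _ hm h0 h1
    rcases Nat.eq_zero_or_pos n with rfl | hn
    · exact ⟨1, le_refl _, le_refl _, h0, h1⟩
    by_cases hx : x ≤ xp n
    · obtain ⟨k, hk1, hk2, hk3, hk4⟩ := ih hn (fun i hi => hm i (by omega)) h0 hx
      exact ⟨k, hk1, by omega, hk3, hk4⟩
    · push_neg at hx
      refine ⟨n + 1, by omega, le_refl _, ?_, h1⟩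
      simpa using hx.le

theorem pwq_relu_network_exists (s : ℕ) (hs : 1 ≤ s) (xp : ℕ → ℝ)
    (hmono : ∀ i < s, xp i < xp (i + 1))
    (S l c : ℕ → ℝ) (V : ℝ → ℝ)
    (hV : ∀ i, 1 ≤ i → i ≤ s → ∀ x ∈ Set.Icc (xp (i - 1)) (xp i),
      V x = S i * x ^ 2 + l i * x + c i) :
    ∃ (W1 : Matrix (Fin (2 * s)) (Fin 2) ℝ) (a1 : Fin (2 * s) → ℝ)
      (W2 : Fin (2 * s) → ℝ) (a2 : ℝ),
      ∀ x ∈ Set.Icc (xp 0) (xp s),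
        V x = (∑ j : Fin (2 * s),
            W2 j * max 0 (W1 j 0 * x + W1 j 1 * x ^ 2 + a1 j)) + a2 := by
  classical
  -- auxiliary data
  set M : ℝ := xp s - xp 0 + 1 with hMdef
  set SS : ℕ → ℝ := fun i => if i = 0 then 0 else S i with hSS
  set ll : ℕ → ℝ := fun i => if i = 0 then 0 else l i with hll
  set cc : ℕ → ℝ := fun i =>
    if i = 0 then S 1 * (xp 0) ^ 2 + l 1 * xp 0 + c 1 else c i with hcc
  set Q : ℕ → ℝ → ℝ := fun i y => SS i * y ^ 2 + ll i * y + cc i with hQ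
  set A : ℕ → ℝ := fun i => SS (i + 1) - SS i with hA
  set C : ℕ → ℝ := fun i => 2 * A i * xp i + (ll (i + 1) - ll i) with hC
  -- monotonicity
  have mono : ∀ j, j ≤ s → ∀ i, i ≤ j → xp i ≤ xp j := by
    intro j
    induction j with
    | zero => intro _ i hi; interval_cases i; exact le_refl _
    | succ n ih =>
      intro hj i hi
      rcases Nat.eq_or_lt_of_le hi with rfl | h
      · exact le_refl _
      · exact le_trans (ih (by omega) i (by omega)) (le_of_lt (hmono n (by omega)))
  have hM1 : (1 : ℝ) ≤ M := by
    have := mono s (le_refl s) 0 (by omega)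
    simp only [hMdef]; linarith
  -- Q on pieces agrees with the data
  have hQpos : ∀ i, 1 ≤ i → ∀ y : ℝ, Q i y = S i * y ^ 2 + l i * y + c i := by
    intro i hi y
    simp only [hQ, hSS, hll, hcc, if_neg (by omega : ¬ i = 0)]
  -- continuity at breakpoints
  have hcont : ∀ i < s, Q (i + 1) (xp i) = Q i (xp i) := by
    intro i hi
    rcases Nat.eq_zero_or_pos i with rfl | hipos
    · simp [hQ, hSS, hll, hcc]
    · have h1 : V (xp i) = S (i + 1) * (xp i) ^ 2 + l (i + 1) * xp i + c (i + 1) := by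
        have := hV (i + 1) (by omega) (by omega) (xp i) ?_
        · simpa using this
        · constructor
          · simp
          · exact le_of_lt (hmono i hi)
      have h2 : V (xp i) = S i * (xp i) ^ 2 + l i * xp i + c i := by
        have hle : xp (i - 1) ≤ xp i := by
          have := hmono (i - 1) (by omega)
          have heq : i - 1 + 1 = i := by omega
          rw [heq] at this
          exact this.le
        exact hV i hipos (by omega) (xp i) ⟨hle, le_refl _⟩
      rw [hQpos (i + 1) (by omega), hQpos i hipos]
      rw [← h1, h2]
  refine ⟨Matrix.of fun j v =>
      if (j : ℕ) % 2 = 0 then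
        (if v = (0 : Fin 2) then M - 2 * xp ((j : ℕ) / 2) else 1)
      else (if v = (0 : Fin 2) then 1 else 0),
    fun j => if (j : ℕ) % 2 = 0 then
        xp ((j : ℕ) / 2) ^ 2 - M * xp ((j : ℕ) / 2)
      else -(xp ((j : ℕ) / 2)),
    fun j => if (j : ℕ) % 2 = 0 then A ((j : ℕ) / 2)
      else C ((j : ℕ) / 2) - A ((j : ℕ) / 2) * M,
    cc 0, ?_⟩
  intro x hx
  obtain ⟨hx0, hxs⟩ := hx
  obtain ⟨k, hk1, hks, hkl, hkr⟩ := find_piece xp x s hs hmono hx0 hxs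
  set f : ℕ → ℝ := fun n =>
    if n % 2 = 0 then
      A (n / 2) * max 0 (x ^ 2 + (M - 2 * xp (n / 2)) * x
        + (xp (n / 2) ^ 2 - M * xp (n / 2)))
    else (C (n / 2) - A (n / 2) * M) * max 0 (x - xp (n / 2)) with hf
  have key : ∀ i < s,
      A i * max 0 (x ^ 2 + (M - 2 * xp i) * x + (xp i ^ 2 - M * xp i))
        + (C i - A i * M) * max 0 (x - xp i)
      = if xp i ≤ x then Q (i + 1) x - Q i x else 0 := by
    intro i his
    have harg : x ^ 2 + (M - 2 * xp i) * x + (xp i ^ 2 - M * xp i)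
        = (x - xp i) ^ 2 + M * (x - xp i) := by ring
    by_cases hxi : xp i ≤ x
    · rw [if_pos hxi, harg]
      have ht : 0 ≤ x - xp i := by linarith
      have h1 : max 0 ((x - xp i) ^ 2 + M * (x - xp i))
          = (x - xp i) ^ 2 + M * (x - xp i) := max_eq_right (by nlinarith)
      have h2 : max 0 (x - xp i) = x - xp i := max_eq_right ht
      rw [h1, h2]
      have hc := hcont i his
      simp only [hQ, hA, hC] at *
      linear_combination -hc
    · rw [if_neg hxi]
      push_neg at hxi
      have hxis : xp i ≤ xp s := mono s (le_refl s) i (le_of_lt his)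
      have htM : 0 < (x - xp i) + M := by rw [hMdef]; linarith
      have h1 : max 0 ((x - xp i) ^ 2 + M * (x - xp i)) = 0 := by
        apply max_eq_left
        nlinarith
      rw [harg, h1, max_eq_left (by linarith)]
      ring
  have hQ0 : ∀ y : ℝ, Q 0 y = cc 0 := by
    intro y; simp [hQ, hSS, hll]
  calc V x = Q k x := by
        rw [hQpos k hk1]; exact hV k hk1 hks x ⟨hkl, hkr⟩
    _ = (Q k x - Q 0 x) + Q 0 x := by ring
    _ = (∑ i ∈ range k, (Q (i + 1) x - Q i x)) + Q 0 x := by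
        rw [Finset.sum_range_sub (fun i => Q i x) k]
    _ = (∑ i ∈ range s, if i < k then Q (i + 1) x - Q i x else 0) + Q 0 x := by
        congr 1
        rw [← Finset.sum_range_add_sum_Ico _ hks]
        have hz : ∑ i ∈ Finset.Ico k s, (if i < k then Q (i + 1) x - Q i x else 0) = 0 := by
          apply Finset.sum_eq_zero
          intro i hi
          rw [Finset.mem_Ico] at hi
          rw [if_neg (by omega)]
        rw [hz, add_zero]
        apply Finset.sum_congr rfl
        intro i hi
        rw [Finset.mem_range] at hi
        rw [if_pos hi]
    _ = (∑ i ∈ range s, if xp i ≤ x then Q (i + 1) x - Q i x else 0) + Q 0 x := by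
        congr 1
        apply Finset.sum_congr rfl
        intro i hi
        rw [Finset.mem_range] at hi
        by_cases hik : i < k
        · have hxi : xp i ≤ x := le_trans (mono (k - 1) (by omega) i (by omega)) hkl
          rw [if_pos hik, if_pos hxi]
        · rw [if_neg hik]
          by_cases hxi : xp i ≤ x
          · rw [if_pos hxi]
            have hxk : x ≤ xp i := le_trans hkr (mono i (le_of_lt hi) k (by omega))
            have hxeq : x = xp i := le_antisymm hxk hxi
            rw [hxeq, hcont i hi, sub_self]
          · rw [if_neg hxi]
    _ = (∑ i ∈ range s, (f (2 * i) + f (2 * i + 1))) + Q 0 x := by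
        congr 1
        apply Finset.sum_congr rfl
        intro i hi
        rw [Finset.mem_range] at hi
        have e1 : (2 * i) % 2 = 0 := by omega
        have e2 : (2 * i) / 2 = i := by omega
        have e3 : (2 * i + 1) % 2 = 1 := by omega
        have e4 : (2 * i + 1) / 2 = i := by omega
        rw [hf]
        simp only [e1, e2, e3, e4, if_pos, if_neg (by omega : ¬ (1:ℕ) = 0)]
        exact (key i hi).symm
    _ = (∑ n ∈ range (2 * s), f n) + Q 0 x := by
        rw [sum_range_two_mul f s]
    _ = (∑ j : Fin (2 * s), f (j : ℕ)) + Q 0 x := by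
        rw [Fin.sum_univ_eq_sum_range f (2 * s)]
    _ = _ := by
        rw [hQ0]
        congr 1
        apply Finset.sum_congr rfl
        intro j _
        rw [hf]
        by_cases hj : (j : ℕ) % 2 = 0
        · simp only [Matrix.of_apply, if_pos hj, if_pos rfl,
            if_neg (by decide : ¬ (1 : Fin 2) = 0)]
          congr 1
          simp only [if_true]
          ring
        · simp only [Matrix.of_apply, if_neg hj, if_pos rfl,
            if_neg (by decide : ¬ (1 : Fin 2) = 0)]
          congr 1
          simp only [if_true]
          ring
end

section
/- Let V_N : ℝ² → ℝ be defined on the four regions R^(1) = {x₁≥0, x₂≥0, x₁+x₂≤1}, R^(2) = {x₁≤0, x₂≥0, −x₁+x₂≤1}, R^(3) = {x₁≤0, x₂≤0, −x₁−x₂≤1}, R^(4) = {x₁≥0, x₂≤0, x₁−x₂≤1} by V_N = x₁²+x₂², 2x₁²+x₂², 2x₁²+2x₂², x₁²+2x₂² respectively. Define Φ(x) = −max{0, x₁(−x₁+x₂−1)} − max{0, x₂(−x₁−x₂−1)} − max{0, x₁(−x₁−x₂−1)} − max{0, x₂(x₁−x₂−1)} − 0.5·max{0, −x₂(x₁+x₂−1)}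 − 0.5·max{0, −x₁(x₁+x₂−1)} − 0.5·max{0, −x₂(−x₁+x₂−1)} − 0.5·max{0, −x₁(x₁−x₂−1)}. Then on each region R^(i), the function V_N(x) − Φ(x) is affine in (x₁, x₂); in particular V_N(x) − Φ(x) is piecewise affine on the union of the four regions. -/
def R1ex : Set (ℝ × ℝ) := {x | 0 ≤ x.1 ∧ 0 ≤ x.2 ∧ x.1 + x.2 ≤ 1}
def R2ex : Set (ℝ × ℝ) := {x | x.1 ≤ 0 ∧ 0 ≤ x.2 ∧ -x.1 + x.2 ≤ 1}
def R3ex : Set (ℝ × ℝ) := {x | x.1 ≤ 0 ∧ x.2 ≤ 0 ∧ -x.1 - x.2 ≤ 1}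
def R4ex : Set (ℝ × ℝ) := {x | 0 ≤ x.1 ∧ x.2 ≤ 0 ∧ x.1 - x.2 ≤ 1}

noncomputable def Phi2D (x : ℝ × ℝ) : ℝ :=
  -max 0 (x.1 * (-x.1 + x.2 - 1)) - max 0 (x.2 * (-x.1 - x.2 - 1))
    - max 0 (x.1 * (-x.1 - x.2 - 1)) - max 0 (x.2 * (x.1 - x.2 - 1))
    - 0.5 * max 0 (-x.2 * (x.1 + x.2 - 1)) - 0.5 * max 0 (-x.1 * (x.1 + x.2 - 1))
    - 0.5 * max 0 (-x.2 * (-x.1 + x.2 - 1)) - 0.5 * max 0 (-x.1 * (x.1 - x.2 - 1))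

theorem example_2D_deltaV_pwa (V : ℝ × ℝ → ℝ)
    (hV1 : ∀ x ∈ R1ex, V x = x.1 ^ 2 + x.2 ^ 2)
    (hV2 : ∀ x ∈ R2ex, V x = 2 * x.1 ^ 2 + x.2 ^ 2)
    (hV3 : ∀ x ∈ R3ex, V x = 2 * x.1 ^ 2 + 2 * x.2 ^ 2)
    (hV4 : ∀ x ∈ R4ex, V x = x.1 ^ 2 + 2 * x.2 ^ 2) :
    (∃ k1 k2 k0 : ℝ, ∀ x ∈ R1ex, V x - Phi2D x = k1 * x.1 + k2 * x.2 + k0) ∧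
    (∃ k1 k2 k0 : ℝ, ∀ x ∈ R2ex, V x - Phi2D x = k1 * x.1 + k2 * x.2 + k0) ∧
    (∃ k1 k2 k0 : ℝ, ∀ x ∈ R3ex, V x - Phi2D x = k1 * x.1 + k2 * x.2 + k0) ∧
    (∃ k1 k2 k0 : ℝ, ∀ x ∈ R4ex, V x - Phi2D x = k1 * x.1 + k2 * x.2 + k0) := by
  refine ⟨⟨1, 1, 0, ?_⟩, ⟨-2, 1, 0, ?_⟩, ⟨-2, -2, 0, ?_⟩, ⟨1, -2, 0, ?_⟩⟩
  · rintro x ⟨h1, h2, h3⟩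
    rw [hV1 x ⟨h1, h2, h3⟩, Phi2D,
      max_eq_left (by nlinarith : x.1 * (-x.1 + x.2 - 1) ≤ 0),
      max_eq_left (by nlinarith : x.2 * (-x.1 - x.2 - 1) ≤ 0),
      max_eq_left (by nlinarith : x.1 * (-x.1 - x.2 - 1) ≤ 0),
      max_eq_left (by nlinarith : x.2 * (x.1 - x.2 - 1) ≤ 0),
      max_eq_right (by nlinarith : (0:ℝ) ≤ -x.2 * (x.1 + x.2 - 1)),
      max_eq_right (by nlinarith : (0:ℝ) ≤ -x.1 * (x.1 + x.2 - 1)),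
      max_eq_right (by nlinarith : (0:ℝ) ≤ -x.2 * (-x.1 + x.2 - 1)),
      max_eq_right (by nlinarith : (0:ℝ) ≤ -x.1 * (x.1 - x.2 - 1))]
    norm_num; ring
  · rintro x ⟨h1, h2, h3⟩
    rw [hV2 x ⟨h1, h2, h3⟩, Phi2D,
      max_eq_right (by nlinarith : (0:ℝ) ≤ x.1 * (-x.1 + x.2 - 1)),
      max_eq_left (by nlinarith : x.2 * (-x.1 - x.2 - 1) ≤ 0),
      max_eq_right (by nlinarith : (0:ℝ) ≤ x.1 * (-x.1 - x.2 - 1)),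
      max_eq_left (by nlinarith : x.2 * (x.1 - x.2 - 1) ≤ 0),
      max_eq_right (by nlinarith : (0:ℝ) ≤ -x.2 * (x.1 + x.2 - 1)),
      max_eq_left (by nlinarith : -x.1 * (x.1 + x.2 - 1) ≤ 0),
      max_eq_right (by nlinarith : (0:ℝ) ≤ -x.2 * (-x.1 + x.2 - 1)),
      max_eq_left (by nlinarith : -x.1 * (x.1 - x.2 - 1) ≤ 0)]
    norm_num; ring
  · rintro x ⟨h1, h2, h3⟩
    rw [hV3 x ⟨h1, h2, h3⟩, Phi2D,
      max_eq_right (by nlinarith : (0:ℝ) ≤ x.1 * (-x.1 + x.2 - 1)),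
      max_eq_right (by nlinarith : (0:ℝ) ≤ x.2 * (-x.1 - x.2 - 1)),
      max_eq_right (by nlinarith : (0:ℝ) ≤ x.1 * (-x.1 - x.2 - 1)),
      max_eq_right (by nlinarith : (0:ℝ) ≤ x.2 * (x.1 - x.2 - 1)),
      max_eq_left (by nlinarith : -x.2 * (x.1 + x.2 - 1) ≤ 0),
      max_eq_left (by nlinarith : -x.1 * (x.1 + x.2 - 1) ≤ 0),
      max_eq_left (by nlinarith : -x.2 * (-x.1 + x.2 - 1) ≤ 0),
      max_eq_left (by nlinarith : -x.1 * (x.1 - x.2 - 1) ≤ 0)]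
    norm_num; ring
  · rintro x ⟨h1, h2, h3⟩
    rw [hV4 x ⟨h1, h2, h3⟩, Phi2D,
      max_eq_left (by nlinarith : x.1 * (-x.1 + x.2 - 1) ≤ 0),
      max_eq_right (by nlinarith : (0:ℝ) ≤ x.2 * (-x.1 - x.2 - 1)),
      max_eq_left (by nlinarith : x.1 * (-x.1 - x.2 - 1) ≤ 0),
      max_eq_right (by nlinarith : (0:ℝ) ≤ x.2 * (x.1 - x.2 - 1)),
      max_eq_left (by nlinarith : -x.2 * (x.1 + x.2 - 1) ≤ 0),
      max_eq_right (by nlinarith : (0:ℝ) ≤ -x.1 * (x.1 + x.2 - 1)),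
      max_eq_left (by nlinarith : -x.2 * (-x.1 + x.2 - 1) ≤ 0),
      max_eq_right (by nlinarith : (0:ℝ) ≤ -x.1 * (x.1 - x.2 - 1))]
    norm_num; ring
end
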